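/- Under the Basic Assumption, if the sequence {θ^ν} is bounded away from zero, θ^ν·|τ^ν − τ'| → 0 for some τ' > τ, and Y is compact, then limsup_{ν→∞} 𝔪^ν ≤ 𝔪, where 𝔪^ν is the minimum value of (P)^ν and 𝔪 is the minimum value of (P). -/

import Mathlib

open Filter Topology Metric Set

attribute [local instance] Classical.propDecidable

noncomputable section

/-- `ℝ^n` with the Euclidean norm. -/
abbrev Rn (n : ℕ) : Type := EuclideanSpace ℝ (Fin n)

variable {n m : ℕ} {Q : Type*} [NormedAddCommGroup Q]

/-- `(x, y)` is feasible in the bilevel problem (P): `x ∈ X` and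
`y ∈ τ-argmin_{z ∈ Y} { g(x,z) | H(x,z) ∈ D }`. -/
def PFeas (X : Set (Rn n)) (Y : Set (Rn m)) (D : Set Q)
    (g : Rn n × Rn m → ℝ) (H : Rn n × Rn m → Q) (τ : ℝ)
    (x : Rn n) (y : Rn m) : Prop :=
  x ∈ X ∧ y ∈ Y ∧ H (x, y) ∈ D ∧
    ∀ z ∈ Y, H (x, z) ∈ D → g (x, y) ≤ g (x, z) + τ

/-- The minimum value `𝔪` of (P). -/
def PVal (X : Set (Rn n)) (Y : Set (Rn m)) (D : Set Q)
    (f : Rn n × Rn m → EReal) (g : Rn n × Rn m → ℝ) (H : Rn n × Rn m → Q)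
    (τ : ℝ) : EReal :=
  ⨅ (x : Rn n) (y : Rn m) (_ : PFeas X Y D g H τ x y), f (x, y)

/-- Optimal solution of (P): feasible, finite objective value attaining `𝔪`. -/
def POpt (X : Set (Rn n)) (Y : Set (Rn m)) (D : Set Q)
    (f : Rn n × Rn m → EReal) (g : Rn n × Rn m → ℝ) (H : Rn n × Rn m → Q)
    (τ : ℝ) (x : Rn n) (y : Rn m) : Prop :=
  PFeas X Y D g H τ x y ∧ f (x, y) ≠ ⊤ ∧ f (x, y) = PVal X Y D f g H τ

/-- Feasibility in the alternative problem (P)^ν with data `Yn, gn, Hn, lamBar, τn`. -/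
def PnuFeas (X : Set (Rn n)) (Y : Set (Rn m)) (D : Set Q) (Yn : Set (Rn m))
    (gn : Rn n × Rn m → ℝ) (Hn : Rn n × Rn m → Q) (lamBar τn : ℝ)
    (x : Rn n) (y : Rn m) (u : Q) (α lam : ℝ) : Prop :=
  x ∈ X ∧ y ∈ Y ∧ α ≤ 0 ∧ 0 ≤ lam ∧ lam ≤ lamBar ∧ Hn (x, y) + u ∈ D ∧
    ∀ z ∈ Yn, gn (x, y) + α ≤ gn (x, z) + lam * infDist (Hn (x, z)) D + τn

/-- Objective function of (P)^ν: `f^ν(x,y) + σ^ν ‖u‖ - θ^ν α`. -/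
def PnuObj (fn : Rn n × Rn m → EReal) (σn θn : ℝ)
    (x : Rn n) (y : Rn m) (u : Q) (α : ℝ) : EReal :=
  fn (x, y) + ((σn * ‖u‖ - θn * α : ℝ) : EReal)

/-- The minimum value `𝔪^ν` of (P)^ν. -/
def PnuVal (X : Set (Rn n)) (Y : Set (Rn m)) (D : Set Q) (Yn : Set (Rn m))
    (fn : Rn n × Rn m → EReal) (gn : Rn n × Rn m → ℝ) (Hn : Rn n × Rn m → Q)
    (σn θn lamBar τn : ℝ) : EReal :=
  ⨅ (x : Rn n) (y : Rn m) (u : Q) (α : ℝ) (lam : ℝ)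
    (_ : PnuFeas X Y D Yn gn Hn lamBar τn x y u α lam),
    PnuObj fn σn θn x y u α

/-- `ε`-optimal solution of (P)^ν: feasible with finite objective value at most `𝔪^ν + ε`. -/
def PnuEps (X : Set (Rn n)) (Y : Set (Rn m)) (D : Set Q) (Yn : Set (Rn m))
    (fn : Rn n × Rn m → EReal) (gn : Rn n × Rn m → ℝ) (Hn : Rn n × Rn m → Q)
    (σn θn lamBar τn ε : ℝ)
    (x : Rn n) (y : Rn m) (u : Q) (α lam : ℝ) : Prop :=
  PnuFeas X Y D Yn gn Hn lamBar τn x y u α lam ∧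
    PnuObj fn σn θn x y u α ≠ ⊤ ∧
    PnuObj fn σn θn x y u α ≤ PnuVal X Y D Yn fn gn Hn σn θn lamBar τn + (ε : EReal)

/-- The value function `V(x,u) = inf_{y ∈ Y} { g(x,y) | H(x,y) + u ∈ D }`. -/
def Vfun (Y : Set (Rn m)) (D : Set Q)
    (g : Rn n × Rn m → ℝ) (H : Rn n × Rn m → Q)
    (x : Rn n) (u : Q) : EReal :=
  ⨅ (y : Rn m) (_ : y ∈ Y ∧ H (x, y) + u ∈ D), (g (x, y) : EReal)

/-- The value function `V` is calm at `x` with penalty threshold `lam`. -/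
def CalmAtWith (Y : Set (Rn m)) (D : Set Q)
    (g : Rn n × Rn m → ℝ) (H : Rn n × Rn m → Q)
    (x : Rn n) (lam : ℝ) : Prop :=
  0 ≤ lam ∧ ∀ u : Q,
    Vfun Y D g H x 0 - ((lam * ‖u‖ : ℝ) : EReal) ≤ Vfun Y D g H x u

/-- The value function `V` is calm at `x`. -/
def CalmAt (Y : Set (Rn m)) (D : Set Q)
    (g : Rn n × Rn m → ℝ) (H : Rn n × Rn m → Q) (x : Rn n) : Prop :=
  ∃ lam : ℝ, CalmAtWith Y D g H x lam

/-- The value function `V` is locally calm at `xbar`. -/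
def LocallyCalmAt (Y : Set (Rn m)) (D : Set Q)
    (g : Rn n × Rn m → ℝ) (H : Rn n × Rn m → Q) (xbar : Rn n) : Prop :=
  ∃ lam ρ : ℝ, 0 ≤ lam ∧ 0 < ρ ∧
    ∀ x ∈ Metric.closedBall xbar ρ, ∀ u : Q,
      Vfun Y D g H x 0 - ((lam * ‖u‖ : ℝ) : EReal) ≤ Vfun Y D g H x u

/-- The penalty-based value function `μ(x,λ) = inf_{y ∈ S} [g(x,y) + λ dist(H(x,y), D)]`. -/
def muSet (S : Set (Rn m)) (D : Set Q)
    (g : Rn n × Rn m → ℝ) (H : Rn n × Rn m → Q)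
    (x : Rn n) (lam : ℝ) : EReal :=
  ⨅ (y : Rn m) (_ : y ∈ S), ((g (x, y) + lam * infDist (H (x, y)) D : ℝ) : EReal)

/-- The Basic Assumption (Assumption 2.1). -/
structure BasicAssumption (X : Set (Rn n)) (Y : Set (Rn m)) (D : Set Q)
    (Yν : ℕ → Set (Rn m))
    (f : Rn n × Rn m → EReal) (fν : ℕ → Rn n × Rn m → EReal)
    (g : Rn n × Rn m → ℝ) (gν : ℕ → Rn n × Rn m → ℝ)
    (H : Rn n × Rn m → Q) (Hν : ℕ → Rn n × Rn m → Q)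
    (σ θ lamBar τν δ η : ℕ → ℝ) : Prop where
  X_nonempty : X.Nonempty
  X_closed : IsClosed X
  Y_nonempty : Y.Nonempty
  Y_closed : IsClosed Y
  D_nonempty : D.Nonempty
  D_closed : IsClosed D
  Yν_nonempty : ∀ ν, (Yν ν).Nonempty
  Yν_subset : ∀ ν, Yν ν ⊆ Y
  Yν_conv : ∀ y : Rn m,
    Tendsto (fun ν => infDist y (Yν ν)) atTop (𝓝 (infDist y Y))
  δ_lim : Tendsto δ atTop (𝓝 0)
  g_err : ∀ ν, ∀ x ∈ X, ∀ y ∈ Y, |gν ν (x, y) - g (x, y)| ≤ δ ν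
  g_cont : ContinuousOn g (X ×ˢ Y)
  η_lim : Tendsto η atTop (𝓝 0)
  H_err : ∀ ν, ∀ x ∈ X, ∀ y ∈ Y,
    |infDist (Hν ν (x, y)) D - infDist (H (x, y)) D| ≤ η ν
  H_cont : ContinuousOn H (X ×ˢ Y)
  f_ne_bot : ∀ p, f p ≠ ⊥
  fν_ne_bot : ∀ ν p, fν ν p ≠ ⊥
  f_limsup : ∀ x ∈ X, ∀ y ∈ Y,
    limsup (fun ν => fν ν (x, y)) atTop ≤ f (x, y)
  f_liminf : ∀ x ∈ X, ∀ y ∈ Y, ∀ (xs : ℕ → Rn n) (ys : ℕ → Rn m),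
    (∀ ν, xs ν ∈ X) → (∀ ν, ys ν ∈ Y) →
    Tendsto xs atTop (𝓝 x) → Tendsto ys atTop (𝓝 y) →
    f (x, y) ≤ liminf (fun ν => fν ν (xs ν, ys ν)) atTop
  σ_nonneg : ∀ ν, 0 ≤ σ ν
  θ_nonneg : ∀ ν, 0 ≤ θ ν
  lamBar_nonneg : ∀ ν, 0 ≤ lamBar ν
  τν_nonneg : ∀ ν, 0 ≤ τν ν
  lamBar_top : Tendsto lamBar atTop atTop
  ση_lim : Tendsto (fun ν => σ ν * η ν) atTop (𝓝 0)
  θlamη_lim : Tendsto (fun ν => θ ν * lamBar ν * η ν) atTop (𝓝 0)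
  θδ_lim : Tendsto (fun ν => θ ν * δ ν) atTop (𝓝 0)

/-!
Fix a feasible pair `(x, y)` of (P) and `0 < ε < τ' - τ`. On the compact set `Y` the lower-level
constraint `H(x, ·) ∈ D` can be penalized exactly up to the slack `ε`: where `g(x, ·)` drops more
than `ε` below the required level, `dist(H(x, ·), D)` is bounded away from `0`. Once `λ̄^ν`
exceeds such a penalty parameter and `τ^ν` has absorbed `ε` and the errors `2δ^ν + λ̄^ν η^ν`,
the point `(x, y)` with `α = 0`, `λ = λ̄^ν` and `u` the shortest correction of `H^ν(x, y)` into
`D` is feasible for (P)^ν, at cost at most `f^ν(x, y) + σ^ν η^ν`.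
-/

theorem tendsto_zero_of_mul_tendsto_zero {ι : Type*} {l : Filter ι} {a b : ι → ℝ} {c : ℝ}
    (hc : 0 < c) (hb : ∀ i, c ≤ b i) (h : Tendsto (fun i => b i * a i) l (𝓝 0)) :
    Tendsto a l (𝓝 0) := by
  have hbound : Tendsto (fun i => c⁻¹ * ‖b i * a i‖) l (𝓝 0) := by
    simpa using h.norm.const_mul c⁻¹
  refine squeeze_zero_norm (fun i => ?_) hbound
  have hbi : 1 ≤ c⁻¹ * ‖b i‖ := by
    rw [Real.norm_of_nonneg (hc.le.trans (hb i))]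
    exact (one_le_inv_mul₀ hc).2 (hb i)
  rw [norm_mul, ← mul_assoc]
  exact le_mul_of_one_le_left (norm_nonneg _) hbi

theorem exists_add_mem_norm_eq_infDist {E : Type*} [NormedAddCommGroup E] [ProperSpace E]
    {D : Set E} (hD : IsClosed D) (hDne : D.Nonempty) (p : E) :
    ∃ u, p + u ∈ D ∧ ‖u‖ = infDist p D := by
  obtain ⟨w, hw, hdist⟩ := hD.exists_infDist_eq_dist hDne p
  exact ⟨w - p, by simpa using hw, by rw [hdist, dist_comm, dist_eq_norm]⟩

theorem IsCompact.eventually_le_add_mul_infDist {E F : Type*} [TopologicalSpace E] [T2Space E]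
    [PseudoMetricSpace F] {Y : Set E} {D : Set F} (hY : IsCompact Y) (hD : IsClosed D)
    (hDne : D.Nonempty) {G : E → ℝ} {K : E → F} (hG : ContinuousOn G Y) (hK : ContinuousOn K Y)
    {c ε : ℝ} (hε : 0 < ε) (hc : ∀ z ∈ Y, K z ∈ D → c ≤ G z) :
    ∀ᶠ lam in atTop, ∀ z ∈ Y, c ≤ G z + lam * infDist (K z) D + ε := by
  set S := Y ∩ G ⁻¹' Iic (c - ε)
  have hS : IsCompact S :=
    hY.of_isClosed_subset (hG.preimage_isClosed_of_isClosed hY.isClosed isClosed_Iic)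
      inter_subset_left
  have hdist_pos : ∀ z ∈ S, 0 < infDist (K z) D := by
    rintro z ⟨hzY, hzG : G z ≤ c - ε⟩
    refine infDist_nonneg.lt_of_ne fun h => ?_
    linarith [hc z hzY ((hD.mem_iff_infDist_zero hDne).2 h.symm)]
  obtain ⟨d, hd, hdS⟩ := hS.exists_forall_le' ((continuous_infDist_pt D).comp_continuousOn
    (hK.mono inter_subset_left)) hdist_pos
  obtain ⟨b, hb⟩ := hY.bddBelow_image hG
  filter_upwards [eventually_ge_atTop (max 0 ((c - b) / d))] with lam hlam z hz
  have hlam0 : 0 ≤ lam := le_of_max_le_left hlam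
  have hpen_nonneg : 0 ≤ lam * infDist (K z) D := mul_nonneg hlam0 infDist_nonneg
  by_cases hzG : G z ≤ c - ε
  · have hbz : b ≤ G z := hb (mem_image_of_mem G hz)
    have : c - b ≤ lam * infDist (K z) D :=
      calc c - b ≤ lam * d := (div_le_iff₀ hd).1 (le_of_max_le_right hlam)
        _ ≤ lam * infDist (K z) D := mul_le_mul_of_nonneg_left (hdS z ⟨hz, hzG⟩) hlam0
    linarith
  · linarith [not_le.1 hzG]

theorem EReal.limsup_le_of_eventually_le_add {ι : Type*} {l : Filter ι} [l.NeBot]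
    {a b : ι → EReal} {r : ι → ℝ} (hr : Tendsto r l (𝓝 0))
    (h : ∀ᶠ i in l, a i ≤ b i + r i) : limsup a l ≤ limsup b l := by
  have hr' : limsup (fun i => (r i : EReal)) l = 0 := by
    simpa using (EReal.tendsto_coe.2 hr).limsup_eq
  calc limsup a l ≤ limsup (fun i => b i + r i) l := limsup_le_limsup h
    _ ≤ limsup b l + limsup (fun i => (r i : EReal)) l :=
        EReal.limsup_add_le (.inr (by simp [hr'])) (.inr (by simp [hr']))
    _ = limsup b l := by rw [hr', add_zero]

theorem PnuVal_le_PnuObj {X : Set (Rn n)} {Y : Set (Rn m)} {D : Set Q} {Yn : Set (Rn m)}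
    {fn : Rn n × Rn m → EReal} {gn : Rn n × Rn m → ℝ} {Hn : Rn n × Rn m → Q}
    {σn θn lamBar τn : ℝ} {x : Rn n} {y : Rn m} {u : Q} {α lam : ℝ}
    (h : PnuFeas X Y D Yn gn Hn lamBar τn x y u α lam) :
    PnuVal X Y D Yn fn gn Hn σn θn lamBar τn ≤ PnuObj fn σn θn x y u α :=
  iInf_le_of_le x <| iInf_le_of_le y <| iInf_le_of_le u <| iInf_le_of_le α <|
    iInf_le_of_le lam <| iInf_le _ h

namespace BasicAssumption

variable [ProperSpace Q]
  {X : Set (Rn n)} {Y : Set (Rn m)} {D : Set Q} {Yν : ℕ → Set (Rn m)}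
  {f : Rn n × Rn m → EReal} {fν : ℕ → Rn n × Rn m → EReal}
  {g : Rn n × Rn m → ℝ} {gν : ℕ → Rn n × Rn m → ℝ}
  {H : Rn n × Rn m → Q} {Hν : ℕ → Rn n × Rn m → Q}
  {σ θ lamBar τν δ η : ℕ → ℝ}

theorem eventually_PnuVal_le (ba : BasicAssumption X Y D Yν f fν g gν H Hν σ θ lamBar τν δ η)
    (hYcpt : IsCompact Y) {τ τ' : ℝ} (hττ' : τ < τ') (hτν : Tendsto τν atTop (𝓝 τ'))
    (hlamη : Tendsto (fun ν => lamBar ν * η ν) atTop (𝓝 0)) {x : Rn n} {y : Rn m}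
    (hxy : PFeas X Y D g H τ x y) :
    ∀ᶠ ν in atTop, PnuVal X Y D (Yν ν) (fν ν) (gν ν) (Hν ν) (σ ν) (θ ν) (lamBar ν) (τν ν)
      ≤ fν ν (x, y) + ((σ ν * η ν : ℝ) : EReal) := by
  obtain ⟨hx, hy, hHxy, hmin⟩ := hxy
  obtain ⟨ε, hε, hετ⟩ := exists_between (sub_pos.2 hττ')
  have hsection : ContinuousOn (fun z => (x, z)) Y := by fun_prop
  have hmaps : MapsTo (fun z => (x, z)) Y (X ×ˢ Y) := fun z hz => mk_mem_prod hx hz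
  have hpen : ∀ᶠ ν in atTop, ∀ z ∈ Y,
      g (x, y) ≤ g (x, z) + τ + lamBar ν * infDist (H (x, z)) D + ε :=
    ba.lamBar_top.eventually <| hYcpt.eventually_le_add_mul_infDist ba.D_closed ba.D_nonempty
      ((ba.g_cont.comp hsection hmaps).add continuousOn_const) (ba.H_cont.comp hsection hmaps)
      hε hmin
  have hslack : ∀ᶠ ν in atTop, τ + ε + 2 * δ ν + lamBar ν * η ν < τν ν := by
    have : Tendsto (fun ν => τν ν - 2 * δ ν - lamBar ν * η ν) atTop (𝓝 τ') := by
      simpa using (hτν.sub (ba.δ_lim.const_mul 2)).sub hlamη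
    filter_upwards [this.eventually_const_lt (show τ + ε < τ' by linarith)] with ν hν
    linarith
  filter_upwards [hpen, hslack] with ν hpen hslack
  obtain ⟨u, hu, hnorm⟩ := exists_add_mem_norm_eq_infDist ba.D_closed ba.D_nonempty (Hν ν (x, y))
  have hu_le : ‖u‖ ≤ η ν := by
    have := (abs_le.1 (ba.H_err ν x hx y hy)).2
    rw [infDist_zero_of_mem hHxy] at this
    linarith
  have hfeas : PnuFeas X Y D (Yν ν) (gν ν) (Hν ν) (lamBar ν) (τν ν) x y u 0 (lamBar ν) := by
    refine ⟨hx, hy, le_rfl, ba.lamBar_nonneg ν, le_rfl, hu, fun z hz => ?_⟩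
    have hzY := ba.Yν_subset ν hz
    have hgy := abs_le.1 (ba.g_err ν x hx y hy)
    have hgz := abs_le.1 (ba.g_err ν x hx z hzY)
    have hdist : lamBar ν * infDist (H (x, z)) D
        ≤ lamBar ν * infDist (Hν ν (x, z)) D + lamBar ν * η ν := by
      rw [← mul_add]
      exact mul_le_mul_of_nonneg_left (by linarith [(abs_le.1 (ba.H_err ν x hx z hzY)).1])
        (ba.lamBar_nonneg ν)
    linarith [hpen z hzY]
  calc _ ≤ PnuObj (fν ν) (σ ν) (θ ν) x y u 0 := PnuVal_le_PnuObj hfeas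
    _ ≤ _ := by
      rw [PnuObj, mul_zero, sub_zero]
      gcongr
      exact ba.σ_nonneg ν

end BasicAssumption

theorem Pnu_limsup_le_PVal_general
    [NormedSpace ℝ Q] [FiniteDimensional ℝ Q]
    (X : Set (Rn n)) (Y : Set (Rn m)) (D : Set Q) (Yν : ℕ → Set (Rn m))
    (f : Rn n × Rn m → EReal) (fν : ℕ → Rn n × Rn m → EReal)
    (g : Rn n × Rn m → ℝ) (gν : ℕ → Rn n × Rn m → ℝ)
    (H : Rn n × Rn m → Q) (Hν : ℕ → Rn n × Rn m → Q)
    (σ θ lamBar τν δ η : ℕ → ℝ) (τ : ℝ)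
    (ba : BasicAssumption X Y D Yν f fν g gν H Hν σ θ lamBar τν δ η)
    (hθ : ∃ c : ℝ, 0 < c ∧ ∀ ν, c ≤ θ ν)
    (τ' : ℝ) (hττ' : τ < τ')
    (hrate : Tendsto (fun ν => θ ν * |τν ν - τ'|) atTop (𝓝 0))
    (hYcpt : IsCompact Y) :
    limsup (fun ν =>
        PnuVal X Y D (Yν ν) (fν ν) (gν ν) (Hν ν) (σ ν) (θ ν) (lamBar ν) (τν ν)) atTop
      ≤ PVal X Y D f g H τ := by
  obtain ⟨c, hc, hcθ⟩ := hθ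
  have hτν : Tendsto τν atTop (𝓝 τ') := by
    rw [tendsto_iff_norm_sub_tendsto_zero]
    simpa only [Real.norm_eq_abs] using tendsto_zero_of_mul_tendsto_zero hc hcθ hrate
  have hlamη : Tendsto (fun ν => lamBar ν * η ν) atTop (𝓝 0) :=
    tendsto_zero_of_mul_tendsto_zero hc hcθ (by simpa only [mul_assoc] using ba.θlamη_lim)
  refine le_iInf₂ fun x y => le_iInf fun hxy => ?_
  calc _ ≤ limsup (fun ν => fν ν (x, y)) atTop := EReal.limsup_le_of_eventually_le_add
        ba.ση_lim (ba.eventually_PnuVal_le hYcpt hττ' hτν hlamη hxy)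
    _ ≤ f (x, y) := ba.f_limsup x hxy.1 y hxy.2.1

/-- Theorem 2.2(a): bounds from (P)^ν on the minimum value of (P). -/
theorem Pnu_limsup_le_PVal
    [NormedSpace ℝ Q] [FiniteDimensional ℝ Q]
    (X : Set (Rn n)) (Y : Set (Rn m)) (D : Set Q) (Yν : ℕ → Set (Rn m))
    (f : Rn n × Rn m → EReal) (fν : ℕ → Rn n × Rn m → EReal)
    (g : Rn n × Rn m → ℝ) (gν : ℕ → Rn n × Rn m → ℝ)
    (H : Rn n × Rn m → Q) (Hν : ℕ → Rn n × Rn m → Q)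
    (σ θ lamBar τν δ η : ℕ → ℝ) (τ : ℝ) (hτ : 0 ≤ τ)
    (ba : BasicAssumption X Y D Yν f fν g gν H Hν σ θ lamBar τν δ η)
    (hθ : ∃ c : ℝ, 0 < c ∧ ∀ ν, c ≤ θ ν)
    (τ' : ℝ) (hττ' : τ < τ')
    (hrate : Tendsto (fun ν => θ ν * |τν ν - τ'|) atTop (𝓝 0))
    (hYcpt : IsCompact Y) :
    limsup (fun ν =>
        PnuVal X Y D (Yν ν) (fν ν) (gν ν) (Hν ν) (σ ν) (θ ν) (lamBar ν) (τν ν)) atTop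
      ≤ PVal X Y D f g H τ :=
  Pnu_limsup_le_PVal_general X Y D Yν f fν g gν H Hν σ θ lamBar τν δ η τ ba hθ τ' hττ' hrate hYcpt
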